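/- arXiv:quant-ph/9906117 — 3 statements merged into one kernel-verified Lean document; each statement's English description precedes it below -/
import Mathlib

section
/- (Euler formula for mixed-power homogeneous operators.) Let V, W be real normed spaces of complex-valued functions (or more abstractly, let V, W be real Banach spaces with a complex scalar multiplication), let H : V → W be Fréchet differentiable at φ, and suppose H(kφ) = k^{(a,b)}·H(φ) for all k in a neighborhood of 1 in ℂ, where k^{(a,b)} = exp(a·ln|k| + i·b·arg k). Then for every η ∈ ℂ, the Fréchet derivative satisfies DH(φ)(η·φ) = (a·Re η + i·b·Im η)·H(φ). -/
/-!
Restricted to the complex line through `φ`, homogeneity reads `H (k • φ) = f k • H φ` with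
`f k = k^{(a,b)}`. Differentiating at `k = 1` by the chain rule gives `D (η • φ) = f'(1) η • H φ`,
and since `k^{(a,b)} = exp ((a,b)·log k)` with `log` having real derivative the identity at `1`,
`f'(1) η = (a,b)·η`.
-/

/-- The mixed `(a,b)` power of a complex scalar `k` (principal argument). -/
noncomputable def mixedPow (k a b : ℂ) : ℂ :=
  Complex.exp (a * Real.log ‖k‖ + Complex.I * b * k.arg)

open Complex

/-- The ℝ-linear map `η ↦ (a,b)·η`. -/
noncomputable def mixedLinear (a b : ℂ) : ℂ →L[ℝ] ℂ :=
  a • (ofRealCLM ∘L reCLM) + (I * b) • (ofRealCLM ∘L imCLM)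

@[simp]
theorem mixedLinear_apply (a b η : ℂ) :
    mixedLinear a b η = a * (η.re : ℂ) + I * b * (η.im : ℂ) := by
  simp [mixedLinear, mul_comm]

theorem mixedPow_eq_exp_mixedLinear_log (k a b : ℂ) :
    mixedPow k a b = exp (mixedLinear a b (log k)) := by
  simp [mixedPow, log_re, log_im]

theorem Complex.hasFDerivAt_log_one : HasFDerivAt log (ContinuousLinearMap.id ℝ ℂ) 1 := by
  refine ((hasDerivAt_log one_mem_slitPlane).hasFDerivAt.restrictScalars ℝ).congr_fderiv ?_
  ext; simp

theorem hasFDerivAt_mixedPow_one (a b : ℂ) :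
    HasFDerivAt (fun k => mixedPow k a b) (mixedLinear a b) 1 := by
  simp_rw [mixedPow_eq_exp_mixedLinear_log]
  simpa using ((mixedLinear a b).hasFDerivAt.comp 1 hasFDerivAt_log_one).cexp

theorem HasFDerivAt.apply_smul_eq_of_eventually_homogeneous
    {𝕜 V W : Type*} [NontriviallyNormedField 𝕜] [NormedAlgebra ℝ 𝕜]
    [NormedAddCommGroup V] [NormedSpace ℝ V] [NormedSpace 𝕜 V] [IsScalarTower ℝ 𝕜 V]
    [NormedAddCommGroup W] [NormedSpace ℝ W] [NormedSpace 𝕜 W] [IsScalarTower ℝ 𝕜 W]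
    {H : V → W} {D : V →L[ℝ] W} {φ : V} {f : 𝕜 → 𝕜} {f' : 𝕜 →L[ℝ] 𝕜}
    (hD : HasFDerivAt H D φ) (hf : HasFDerivAt f f' 1)
    (hhom : ∀ᶠ k in nhds (1 : 𝕜), H (k • φ) = f k • H φ) (η : 𝕜) :
    D (η • φ) = f' η • H φ := by
  have hline : HasFDerivAt (fun k : 𝕜 => H (k • φ))
      (D ∘L (ContinuousLinearMap.id ℝ 𝕜).smulRight φ) 1 :=
    (one_smul 𝕜 φ ▸ hD).comp 1 ((hasFDerivAt_id (1 : 𝕜)).smul_const φ)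
  have hrhs := (hf.smul_const (H φ)).congr_of_eventuallyEq hhom
  simpa using congr($(hline.unique hrhs) η)

/-- Euler's formula for mixed-power homogeneous operators: if `H : V → W` is Fréchet
differentiable (over `ℝ`) at `φ` with derivative `D`, and `H(kφ) = k^{(a,b)} • H(φ)` for
all complex `k` near `1`, then `D(η•φ) = (a·Re η + i·b·Im η) • H(φ)` for every `η ∈ ℂ`. -/
theorem euler_mixedPow_homogeneous
    {V W : Type*} [NormedAddCommGroup V] [NormedSpace ℂ V]
    [NormedAddCommGroup W] [NormedSpace ℂ W]
    (H : V → W) (φ : V) (a b : ℂ) (D : V →L[ℝ] W)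
    (hD : HasFDerivAt H D φ)
    (hhom : ∀ᶠ k in nhds (1 : ℂ), H (k • φ) = mixedPow k a b • H φ) :
    ∀ η : ℂ, D (η • φ) = (a * (η.re : ℂ) + Complex.I * b * (η.im : ℂ)) • H φ := by
  intro η
  simpa using hD.apply_smul_eq_of_eventually_homogeneous (hasFDerivAt_mixedPow_one a b) hhom η
end

section
/- For index pairs (a,b) and (c,d), the pointwise operators Λ(a,b) and Λ(c,d) on nowhere-zero complex functions satisfy [Λ(a,b), Λ(c,d)] = Λ([(a,b),(c,d)]), where the bracket of operators is [F,G](φ) = DF(φ)(G(φ)) - DG(φ)(F(φ)) (computable pointwise since Λ acts pointwise) and [(a,b),(c,d)] is the commutator in the index algebra. -/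
/-- The product on index pairs: `(a,b)(c,d) = (a·Re c + i·b·Im c, b·Re d + i·a·Im d)`. -/
noncomputable def idxMul (p q : ℂ × ℂ) : ℂ × ℂ :=
  (p.1 * (q.1.re : ℂ) + Complex.I * p.2 * (q.1.im : ℂ),
   p.2 * (q.2.re : ℂ) + Complex.I * p.1 * (q.2.im : ℂ))

/-- The commutator bracket on index pairs. -/
noncomputable def idxBracket (p q : ℂ × ℂ) : ℂ × ℂ :=
  idxMul p q - idxMul q p

/-- The pointwise operator `λ_{(a,b)}(w) = ((a,b)·log w)·w`, using the principal branch
of the logarithm. -/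
noncomputable def lambdaPt (a b : ℂ) (w : ℂ) : ℂ :=
  (a * (((Complex.log w).re : ℝ) : ℂ) + Complex.I * b * (((Complex.log w).im : ℝ) : ℂ)) * w

/-!
Write `λ_p(w) = (p·log w)·w`, where `z ↦ p·z` is ℝ-linear. Then
`Dλ_p(w) h = (p·log w) h + w (p·(h/w))`, so at `h = λ_q(w) = (q·log w) w` the first term is
symmetric in `p, q` and cancels in the bracket, leaving `w (p·(q·log w) - q·(p·log w))`.
Finally `p·(q·z) = (pq)·z`, so the bracket of the `λ`'s is `λ` of the index commutator.
-/

open Complex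

/-- The paper's `(a,b)·z`. -/
noncomputable def idxAct (p : ℂ × ℂ) : ℂ →L[ℝ] ℂ :=
  p.1 • (ofRealCLM.comp reCLM) + (I * p.2) • (ofRealCLM.comp imCLM)

@[simp]
lemma idxAct_apply (p : ℂ × ℂ) (z : ℂ) : idxAct p z = p.1 * z.re + I * p.2 * z.im := by
  simp [idxAct, mul_assoc]

lemma idxAct_sub (p q : ℂ × ℂ) : idxAct (p - q) = idxAct p - idxAct q := by
  ext z
  simp only [idxAct_apply, Prod.fst_sub, Prod.snd_sub, sub_apply]
  ring

lemma idxAct_idxAct (p q : ℂ × ℂ) (z : ℂ) : idxAct p (idxAct q z) = idxAct (idxMul p q) z := by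
  apply Complex.ext <;> simp [idxMul] <;> ring

lemma lambdaPt_eq_idxAct (a b w : ℂ) : lambdaPt a b w = idxAct (a, b) (log w) * w := by
  simp [lambdaPt]

lemma hasFDerivAt_lambdaPt (a b : ℂ) {w : ℂ} (hw : w ∈ slitPlane) :
    HasFDerivAt (lambdaPt a b)
      (idxAct (a, b) (log w) • ContinuousLinearMap.id ℝ ℂ +
        w • (idxAct (a, b)).comp (w⁻¹ • ContinuousLinearMap.id ℝ ℂ)) w := by
  have hlog : HasFDerivAt log (w⁻¹ • ContinuousLinearMap.id ℝ ℂ) w :=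
    ((hasDerivAt_log hw).hasFDerivAt.restrictScalars ℝ).congr_fderiv (by ext; simp [mul_comm])
  rw [show lambdaPt a b = fun z ↦ idxAct (a, b) (log z) * z from funext (lambdaPt_eq_idxAct a b)]
  exact ((idxAct (a, b)).hasFDerivAt.comp w hlog).mul (hasFDerivAt_id w)

lemma lambdaPt_fderiv_apply {a b w : ℂ} {D : ℂ →L[ℝ] ℂ} (hw : w ∈ slitPlane)
    (hD : HasFDerivAt (lambdaPt a b) D w) (h : ℂ) :
    D h = idxAct (a, b) (log w) * h + w * idxAct (a, b) (h / w) := by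
  rw [hD.unique (hasFDerivAt_lambdaPt a b hw)]
  simp [div_eq_inv_mul]

theorem lambdaPt_bracket_general (a b c d : ℂ) (w : ℂ)
    (hcut : 0 < w.re ∨ w.im ≠ 0)
    (Dab Dcd : ℂ →L[ℝ] ℂ)
    (hab : HasFDerivAt (lambdaPt a b) Dab w)
    (hcd : HasFDerivAt (lambdaPt c d) Dcd w) :
    Dab (lambdaPt c d w) - Dcd (lambdaPt a b w) =
      lambdaPt (idxBracket (a, b) (c, d)).1 (idxBracket (a, b) (c, d)).2 w := by
  have hw : w ∈ slitPlane := hcut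
  have hw₀ : w ≠ 0 := slitPlane_ne_zero hw
  rw [lambdaPt_fderiv_apply hw hab, lambdaPt_fderiv_apply hw hcd, lambdaPt_eq_idxAct,
    lambdaPt_eq_idxAct, lambdaPt_eq_idxAct, mul_div_cancel_right₀ _ hw₀,
    mul_div_cancel_right₀ _ hw₀, idxAct_idxAct, idxAct_idxAct, idxBracket, idxAct_sub, sub_apply]
  ring

/-- `[Λ(a,b), Λ(c,d)] = Λ([(a,b),(c,d)])` pointwise: at any nonzero `w` off the branch cut
where `λ_{(a,b)}` and `λ_{(c,d)}` are real-Fréchet differentiable with derivatives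
`Dab`, `Dcd`, one has `Dab(λ_{(c,d)}(w)) - Dcd(λ_{(a,b)}(w)) = λ_{[(a,b),(c,d)]}(w)`. -/
theorem lambdaPt_bracket (a b c d : ℂ) (w : ℂ) (hw : w ≠ 0)
    (hcut : 0 < w.re ∨ w.im ≠ 0)
    (Dab Dcd : ℂ →L[ℝ] ℂ)
    (hab : HasFDerivAt (lambdaPt a b) Dab w)
    (hcd : HasFDerivAt (lambdaPt c d) Dcd w) :
    Dab (lambdaPt c d w) - Dcd (lambdaPt a b w) =
      lambdaPt (idxBracket (a, b) (c, d)).1 (idxBracket (a, b) (c, d)).2 w :=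
  lambdaPt_bracket_general a b c d w hcut Dab Dcd hab hcd
end

section
/- (Symmetry equation preserved under composition.) Let F(t) be a time-dependent operator and suppose V and W (of symmetry form with data V(t), T_V and W(t), T_W) satisfy ħ·∂_t V(t) = (−i F(t))∘V(t) − T_V'(t)·DV(t)·(−i F(T_V(t))) and the analogous equation for W. Then the composite U(t) = V(t)∘W(T_V(t)) with T_U = T_W∘T_V satisfies ħ·∂_t U(t) = (−i F(t))∘U(t) − T_U'(t)·DU(t)·(−i F(T_U(t))). -/
/-- The symmetry equation is preserved under composition: if `(V, T_V)` and `(W, T_W)`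
each satisfy the symmetry equation
`ħ·∂_t V(t)(φ) = (−i F(t))(V(t)(φ)) − T_V'(t)·DV(t)(φ)((−i F(T_V(t)))(φ))`,
then the composite `U(t) = V(t)∘W(T_V(t))`, `T_U = T_W∘T_V` satisfies the symmetry
equation, where (by the chain rule) the time derivative of `U(t)(φ)` is
`∂_t V(t)(ψ) + DV(t)(ψ)(T_V'(t)·∂_s W(s)(φ)|_{s=T_V(t)})` with `ψ = W(T_V(t))(φ)`,
the Fréchet derivative of `U(t)` at `φ` is `DV(t)(ψ)∘DW(T_V(t))(φ)`, and
`T_U'(t) = T_W'(T_V(t))·T_V'(t)`. -/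
theorem symmetry_equation_comp
    {B : Type*} [NormedAddCommGroup B] [NormedSpace ℂ B]
    (hbar : ℝ) (F : ℝ → B → B)
    (V W : ℝ → B → B) (TV TW : ℝ → ℝ) (TV' TW' : ℝ → ℝ)
    (Vt' Wt' : ℝ → B → B)
    (DV DW : ℝ → B → B →L[ℝ] B)
    (hTV : ∀ t, HasDerivAt TV (TV' t) t)
    (hTW : ∀ t, HasDerivAt TW (TW' t) t)
    (hVt : ∀ (φ : B) (t : ℝ), HasDerivAt (fun s => V s φ) (Vt' t φ) t)
    (hWt : ∀ (φ : B) (t : ℝ), HasDerivAt (fun s => W s φ) (Wt' t φ) t)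
    (hDV : ∀ (t : ℝ) (φ : B), HasFDerivAt (V t) (DV t φ) φ)
    (hDW : ∀ (t : ℝ) (φ : B), HasFDerivAt (W t) (DW t φ) φ)
    (hVsym : ∀ (t : ℝ) (φ : B),
      hbar • Vt' t φ =
        (-Complex.I) • F t (V t φ) - TV' t • DV t φ ((-Complex.I) • F (TV t) φ))
    (hWsym : ∀ (t : ℝ) (φ : B),
      hbar • Wt' t φ =
        (-Complex.I) • F t (W t φ) - TW' t • DW t φ ((-Complex.I) • F (TW t) φ)) :
    ∀ (t : ℝ) (φ : B),
      hbar • (Vt' t (W (TV t) φ) +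
          DV t (W (TV t) φ) (TV' t • Wt' (TV t) φ)) =
        (-Complex.I) • F t (V t (W (TV t) φ)) -
          (TW' (TV t) * TV' t) •
            (DV t (W (TV t) φ))
              ((DW (TV t) φ) ((-Complex.I) • F (TW (TV t)) φ)) := by
  intro t φ
  have h1 := hVsym t (W (TV t) φ)
  have h2 := hWsym (TV t) φ
  have key : hbar • (DV t (W (TV t) φ)) (TV' t • Wt' (TV t) φ)
      = TV' t • (DV t (W (TV t) φ)) (hbar • Wt' (TV t) φ) := by
    rw [map_smul, map_smul, smul_comm]
  rw [smul_add, h1, key, h2, map_sub,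
    (DV t (W (TV t) φ)).map_smul (TW' (TV t)), smul_sub, smul_smul, mul_comm]
  abel
end
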